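/- Let S be an inverse semigroup with zero that is fundamental and whose semilattice of idempotents is 0-disjunctive, and let φ: S → T be a zero-preserving semigroup homomorphism to a semigroup with zero. Then the following are equivalent: (1) φ is injective; (2) the restriction of φ to E(S) is injective; (3) φ⁻¹(0) = {0}; (4) φ⁻¹(0) ∩ E(S) = {0}. -/

import Mathlib

/-- An inverse semigroup with zero. -/
class InverseSemigroup0 (S : Type*) extends Semigroup S, Zero S, Star S where
  zero_mul : ∀ s : S, 0 * s = 0
  mul_zero : ∀ s : S, s * 0 = 0
  mul_star_mul_self : ∀ s : S, s * star s * s = s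
  star_mul_self_star : ∀ s : S, star s * s * star s = star s
  star_unique : ∀ s t : S, s * t * s = s → t * s * t = t → t = star s

/-- The natural partial order on an inverse semigroup. -/
def NatLe {S : Type*} [InverseSemigroup0 S] (a b : S) : Prop := a = b * star a * a

/-- `S` is fundamental: the centralizer of the idempotents consists of idempotents. -/
def Fundamental (S : Type*) [InverseSemigroup0 S] : Prop :=
  ∀ s : S, (∀ e : S, IsIdempotentElem e → s * e = e * s) → IsIdempotentElem s

/-- The semilattice of idempotents of `S` is 0-disjunctive. -/
def ZeroDisjunctive (S : Type*) [InverseSemigroup0 S] : Prop :=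
  ∀ e f : S, IsIdempotentElem e → IsIdempotentElem f → f ≠ 0 → NatLe f e → f ≠ e →
    ∃ g : S, g ≠ 0 ∧ IsIdempotentElem g ∧ NatLe g e ∧ f * g = 0

/-!
If `φ a = φ b`, then `φ (star a) = φ (star b)` because inverses are unique in the image
semigroup, so an injection on idempotents identifies `a a*` with `b b*`, `a* a` with `b* b` and
every conjugate `a g a*` with `b g b*`. Hence `a* b` centralizes the idempotents, is idempotent
since `S` is fundamental, and then `a = b`. Conversely, if `φ e = φ f` for idempotents with
`e f < e`, 0-disjunctivity gives an idempotent `0 ≠ g ≤ e` with `e f g = 0`, and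
`φ g = φ (e f g) = 0` contradicts the triviality of the kernel on idempotents.
-/

lemma inverse_eq_of_commute {T : Type*} [Semigroup T] {t u v : T}
    (hu : u * t * u = u) (hv : v * t * v = v) (htu : t * u * t = t) (htv : t * v * t = t)
    (hc₁ : Commute (u * t) (v * t)) (hc₂ : Commute (t * u) (t * v)) : u = v := by
  have hu' : u = v * t * u :=
    calc u = u * (t * v * t) * u := by rw [htv, hu]
      _ = u * t * (v * t) * u := by simp only [mul_assoc]
      _ = v * t * (u * t) * u := by rw [hc₁.eq]
      _ = v * t * (u * t * u) := by simp only [mul_assoc]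
      _ = v * t * u := by rw [hu]
  have hv' : v = v * t * u :=
    calc v = v * (t * u * t) * v := by rw [htu, hv]
      _ = v * (t * u * (t * v)) := by simp only [mul_assoc]
      _ = v * (t * v * (t * u)) := by rw [hc₂.eq]
      _ = v * t * v * t * u := by simp only [mul_assoc]
      _ = v * t * u := by rw [hv]
  rw [hu', ← hv']

namespace InverseSemigroup0

variable {S : Type*} [InverseSemigroup0 S]

lemma star_eq_of_inverse {s t : S} (h₁ : s * t * s = s) (h₂ : t * s * t = t) : star s = t :=
  (star_unique s t h₁ h₂).symm

lemma star_star (s : S) : star (star s) = s :=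
  star_eq_of_inverse (star_mul_self_star s) (mul_star_mul_self s)

lemma star_eq_self_of_isIdempotentElem {e : S} (he : IsIdempotentElem e) : star e = e :=
  star_eq_of_inverse (by rw [he.eq, he.eq]) (by rw [he.eq, he.eq])

lemma isIdempotentElem_zero : IsIdempotentElem (0 : S) := mul_zero 0

lemma isIdempotentElem_mul_star (s : S) : IsIdempotentElem (s * star s) := by
  rw [IsIdempotentElem, ← mul_assoc, mul_star_mul_self]

lemma isIdempotentElem_star_mul (s : S) : IsIdempotentElem (star s * s) := by
  rw [IsIdempotentElem, ← mul_assoc, star_mul_self_star]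

/-- `f (ef)⁻¹ e` is an idempotent inverse of `ef`, so `ef` is the inverse of an idempotent. -/
lemma isIdempotentElem_mul {e f : S} (he : IsIdempotentElem e) (hf : IsIdempotentElem f) :
    IsIdempotentElem (e * f) := by
  set x := star (e * f)
  have hx : x * (e * f) * x = x := star_mul_self_star (e * f)
  have hg : IsIdempotentElem (f * x * e) :=
    calc f * x * e * (f * x * e) = f * (x * (e * f) * x) * e := by simp only [mul_assoc]
      _ = f * x * e := by rw [hx]
  have hinv₁ : e * f * (f * x * e) * (e * f) = e * f :=
    calc e * f * (f * x * e) * (e * f) = e * (f * f) * x * (e * e * f) := by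
          simp only [mul_assoc]
      _ = e * f * x * (e * f) := by rw [he.eq, hf.eq]
      _ = e * f := mul_star_mul_self (e * f)
  have hinv₂ : f * x * e * (e * f) * (f * x * e) = f * x * e :=
    calc f * x * e * (e * f) * (f * x * e) = f * (x * (e * e * (f * f)) * x) * e := by
          simp only [mul_assoc]
      _ = f * x * e := by rw [he.eq, hf.eq, hx]
  rw [← star_star (e * f), star_eq_of_inverse hinv₁ hinv₂, star_eq_self_of_isIdempotentElem hg]
  exact hg

lemma commute_of_isIdempotentElem {e f : S} (he : IsIdempotentElem e)
    (hf : IsIdempotentElem f) : Commute e f := by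
  have hinv {e f : S} (he : IsIdempotentElem e) (hf : IsIdempotentElem f) :
      e * f * (f * e) * (e * f) = e * f :=
    calc e * f * (f * e) * (e * f) = e * (f * f) * (e * e) * f := by simp only [mul_assoc]
      _ = e * f * (e * f) := by rw [he.eq, hf.eq]; simp only [mul_assoc]
      _ = e * f := isIdempotentElem_mul he hf
  have := star_eq_of_inverse (hinv he hf) (hinv hf he)
  rwa [star_eq_self_of_isIdempotentElem (isIdempotentElem_mul he hf)] at this

lemma star_mul (s t : S) : star (s * t) = star t * star s := by
  have hc := commute_of_isIdempotentElem (isIdempotentElem_mul_star t)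
    (isIdempotentElem_star_mul s)
  refine star_eq_of_inverse ?_ ?_
  · calc s * t * (star t * star s) * (s * t) = s * (t * star t * (star s * s)) * t := by
          simp only [mul_assoc]
      _ = s * (star s * s * (t * star t)) * t := by rw [hc.eq]
      _ = s * star s * s * (t * star t * t) := by simp only [mul_assoc]
      _ = s * t := by rw [mul_star_mul_self, mul_star_mul_self]
  · calc star t * star s * (s * t) * (star t * star s)
          = star t * (star s * s * (t * star t)) * star s := by simp only [mul_assoc]
      _ = star t * (t * star t * (star s * s)) * star s := by rw [← hc.eq]
      _ = star t * t * star t * (star s * s * star s) := by simp only [mul_assoc]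
      _ = star t * star s := by rw [star_mul_self_star, star_mul_self_star]

lemma isIdempotentElem_mul_mul_star (s : S) {g : S} (hg : IsIdempotentElem g) :
    IsIdempotentElem (s * g * star s) := by
  have hc := commute_of_isIdempotentElem hg (isIdempotentElem_star_mul s)
  calc s * g * star s * (s * g * star s) = s * (g * (star s * s)) * g * star s := by
        simp only [mul_assoc]
    _ = s * (star s * s * g) * g * star s := by rw [hc.eq]
    _ = s * star s * s * (g * g) * star s := by simp only [mul_assoc]
    _ = s * g * star s := by rw [mul_star_mul_self, hg.eq]

lemma natLe_iff_of_isIdempotentElem {g : S} (hg : IsIdempotentElem g) (e : S) :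
    NatLe g e ↔ g = e * g := by
  rw [NatLe, star_eq_self_of_isIdempotentElem hg, mul_assoc, hg.eq]

/-- Here `b = a (a* b)`, and `a* b` turns out to be `b* b = a* a`. -/
lemma eq_of_isIdempotentElem_star_mul {a b : S} (hr : a * star a = b * star b)
    (hd : star a * a = star b * b) (he : IsIdempotentElem (star a * b)) : a = b := by
  have hba : star b * a = star a * b := by
    rw [← star_eq_self_of_isIdempotentElem he, star_mul, star_star]
  have hb : b = a * (star a * b) := by rw [← mul_assoc, hr, mul_star_mul_self]
  have hdom : star a * a = star a * b :=
    calc star a * a = star b * (a * (star a * b)) := by rw [← hb, hd]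
      _ = star a * b * (star a * b) := by rw [← mul_assoc, hba]
      _ = star a * b := he.eq
  calc a = a * (star a * a) := by rw [← mul_assoc, mul_star_mul_self]
    _ = a * (star a * b) := by rw [hdom]
    _ = b := hb.symm

end InverseSemigroup0

open InverseSemigroup0

section Homomorphisms

variable {S T : Type*} [InverseSemigroup0 S] [Semigroup T]

lemma map_star_eq_of_map_eq (φ : S →ₙ* T) {a b : S} (h : φ a = φ b) :
    φ (star a) = φ (star b) := by
  have hc {x y : S} (hx : IsIdempotentElem x) (hy : IsIdempotentElem y) :
      Commute (φ x) (φ y) :=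
    (commute_of_isIdempotentElem hx hy).map φ
  refine inverse_eq_of_commute (t := φ a) ?_ ?_ ?_ ?_ ?_ ?_
  · simpa only [map_mul, h] using congrArg φ (star_mul_self_star a)
  · simpa only [map_mul, h] using congrArg φ (star_mul_self_star b)
  · simpa only [map_mul, h] using congrArg φ (mul_star_mul_self a)
  · simpa only [map_mul, h] using congrArg φ (mul_star_mul_self b)
  · simpa only [map_mul, h] using hc (isIdempotentElem_star_mul a) (isIdempotentElem_star_mul b)
  · simpa only [map_mul, h] using hc (isIdempotentElem_mul_star a) (isIdempotentElem_mul_star b)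

lemma isIdempotentElem_star_mul_of_map_eq (hfund : Fundamental S) (φ : S →ₙ* T)
    (hφ : Set.InjOn φ {e : S | IsIdempotentElem e}) {a b : S} (h : φ a = φ b) :
    IsIdempotentElem (star a * b) := by
  have hstar := map_star_eq_of_map_eq φ h
  refine hfund _ fun g hg => ?_
  have hconj : b * g * star b = a * g * star a :=
    hφ (isIdempotentElem_mul_mul_star b hg) (isIdempotentElem_mul_mul_star a hg)
      (by simp only [map_mul, h, hstar])
  have hca := commute_of_isIdempotentElem hg (isIdempotentElem_star_mul a)
  have hcb := commute_of_isIdempotentElem hg (isIdempotentElem_star_mul b)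
  calc star a * b * g = star a * (b * (star b * b * g)) := by
        conv_lhs => rw [← mul_star_mul_self b]
        simp only [mul_assoc]
    _ = star a * (b * g * star b) * b := by rw [← hcb.eq]; simp only [mul_assoc]
    _ = star a * a * g * (star a * b) := by rw [hconj]; simp only [mul_assoc]
    _ = g * (star a * a * star a) * b := by rw [← hca.eq]; simp only [mul_assoc]
    _ = g * (star a * b) := by rw [star_mul_self_star, mul_assoc]

lemma injective_of_injOn_isIdempotentElem (hfund : Fundamental S) (φ : S →ₙ* T)
    (hφ : Set.InjOn φ {e : S | IsIdempotentElem e}) : Function.Injective φ := by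
  intro a b h
  have hstar := map_star_eq_of_map_eq φ h
  refine eq_of_isIdempotentElem_star_mul ?_ ?_ (isIdempotentElem_star_mul_of_map_eq hfund φ hφ h)
  · exact hφ (isIdempotentElem_mul_star a) (isIdempotentElem_mul_star b)
      (by simp only [map_mul, h, hstar])
  · exact hφ (isIdempotentElem_star_mul a) (isIdempotentElem_star_mul b)
      (by simp only [map_mul, h, hstar])

lemma ZeroDisjunctive.exists_mul_eq_zero (hdisj : ZeroDisjunctive S) {e f : S}
    (he : IsIdempotentElem e) (hf : IsIdempotentElem f) (he0 : e ≠ 0) (hef : e * f ≠ e) :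
    ∃ g : S, g ≠ 0 ∧ IsIdempotentElem g ∧ g = e * g ∧ e * f * g = 0 := by
  by_cases hef0 : e * f = 0
  · exact ⟨e, he0, he, he.eq.symm, by rw [hef0, InverseSemigroup0.zero_mul]⟩
  have hle : NatLe (e * f) e := by
    rw [natLe_iff_of_isIdempotentElem (isIdempotentElem_mul he hf), he.mul_self_mul]
  obtain ⟨g, hg0, hg, hge, hefg⟩ :=
    hdisj e (e * f) he (isIdempotentElem_mul he hf) hef0 hle hef
  exact ⟨g, hg0, hg, (natLe_iff_of_isIdempotentElem hg e).mp hge, hefg⟩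

lemma injOn_isIdempotentElem_of_ker [Zero T] (hdisj : ZeroDisjunctive S) (φ : S →ₙ* T)
    (h0 : φ 0 = 0) (hker : ∀ e : S, IsIdempotentElem e → φ e = 0 → e = 0) :
    Set.InjOn φ {e : S | IsIdempotentElem e} := by
  have mul_eq_left {e f : S} (he : IsIdempotentElem e) (hf : IsIdempotentElem f)
      (h : φ e = φ f) : e * f = e := by
    by_contra hef
    have he0 : e ≠ 0 := by
      rintro rfl
      exact hef (InverseSemigroup0.zero_mul f)
    obtain ⟨g, hg0, hg, hge, hefg⟩ := hdisj.exists_mul_eq_zero he hf he0 hef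
    refine hg0 (hker g hg ?_)
    calc φ g = φ (e * e * g) := by rw [he.eq, ← hge]
      _ = φ (e * f * g) := by simp only [map_mul, h]
      _ = 0 := by rw [hefg, h0]
  intro e he f hf h
  calc e = e * f := (mul_eq_left he hf h).symm
    _ = f * e := (commute_of_isIdempotentElem he hf).eq
    _ = f := mul_eq_left hf he h.symm

end Homomorphisms

theorem stmt1_general {S T : Type*} [InverseSemigroup0 S] [Semigroup T] [Zero T]
    (hfund : Fundamental S) (hdisj : ZeroDisjunctive S)
    (φ : S → T) (hmul : ∀ a b : S, φ (a * b) = φ a * φ b) (h0 : φ 0 = 0) :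
    List.TFAE [Function.Injective φ,
      Set.InjOn φ {e : S | IsIdempotentElem e},
      φ ⁻¹' {0} = {0},
      φ ⁻¹' {0} ∩ {e : S | IsIdempotentElem e} = {0}] := by
  let ψ : S →ₙ* T := ⟨φ, hmul⟩
  tfae_have 1 → 3 := fun hinj =>
    Set.ext fun s => ⟨fun hs => hinj (hs.trans h0.symm), by rintro rfl; exact h0⟩
  tfae_have 3 → 4 := fun h3 => by
    rw [h3, Set.inter_eq_left, Set.singleton_subset_iff]
    exact isIdempotentElem_zero
  tfae_have 4 → 2 := fun h4 => injOn_isIdempotentElem_of_ker hdisj ψ h0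
    fun e he hφe => Set.mem_singleton_iff.mp (h4.subset ⟨hφe, he⟩)
  tfae_have 2 → 1 := injective_of_injOn_isIdempotentElem hfund ψ
  tfae_finish

/-- For a fundamental inverse semigroup with zero whose semilattice of idempotents is
0-disjunctive and a zero-preserving homomorphism `φ` to a semigroup with zero, the
following are equivalent: (1) `φ` is injective; (2) `φ` is injective on idempotents;
(3) `φ⁻¹(0) = {0}`; (4) `φ⁻¹(0) ∩ E(S) = {0}`. -/
theorem stmt1 {S T : Type*} [InverseSemigroup0 S] [Semigroup T] [Zero T]
    (hT0 : ∀ t : T, (0 : T) * t = 0 ∧ t * 0 = 0)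
    (hfund : Fundamental S) (hdisj : ZeroDisjunctive S)
    (φ : S → T) (hmul : ∀ a b : S, φ (a * b) = φ a * φ b) (h0 : φ 0 = 0) :
    List.TFAE [Function.Injective φ,
      Set.InjOn φ {e : S | IsIdempotentElem e},
      φ ⁻¹' {0} = {0},
      φ ⁻¹' {0} ∩ {e : S | IsIdempotentElem e} = {0}] :=
  stmt1_general hfund hdisj φ hmul h0
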